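/- Let t ≥ 1 and d ≥ 3, and consider generators of B_t(u) for u = (∏_{i=1}^{d−1} x_{(i−1)t+2})·x_{(d−1)t+3}. Suppose v_1, v_2 ∈ A and v_3, v_4 ∈ B (defined below) are four distinct generators such that {v_1,v_2}, {v_2,v_3}, {v_3,v_4}, {v_4,v_1} are all sorted pairs. Then at least one of the pairs {v_1,v_3}, {v_2,v_4} is also sorted; i.e., these four vertices cannot form an induced 4-cycle in the sorted graph. -/

import Mathlib

/-- Split a list into (odd-position entries, even-position entries), positions counted from 1. -/
def altSplit {α : Type*} : List α → List α × List α
  | [] => ([], [])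
  | a :: l => (a :: (altSplit l).2, (altSplit l).1)

/-- The weakly increasing list of indices of a monomial (viewed as a multiset of variable indices). -/
def mSort (m : Multiset ℕ) : List ℕ := m.sort (· ≤ ·)

/-- The sorting operator: merge the indices of `u` and `v` in weakly increasing order and
give the odd positions to the first component, the even positions to the second. -/
def sortPair (u v : Multiset ℕ) : Multiset ℕ × Multiset ℕ :=
  (↑(altSplit (mSort (u + v))).1, ↑(altSplit (mSort (u + v))).2)

/-- A pair of monomials is sorted if the sorting operator fixes it (up to swapping). -/
def SortedPair (u v : Multiset ℕ) : Prop :=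
  sortPair u v = (u, v) ∨ sortPair u v = (v, u)

/-- A monomial is `t`-spread if consecutive indices (in weakly increasing order) differ by ≥ t. -/
def TSpread (t : ℕ) (m : Multiset ℕ) : Prop :=
  (mSort m).Chain' (fun a b => a + t ≤ b)

/-- `v` is componentwise dominated by `u`. -/
def Dominates (v u : Multiset ℕ) : Prop :=
  List.Forall₂ (· ≤ ·) (mSort v) (mSort u)

/-- The minimal generators of the t-spread principal Borel ideal `B_t(u)`:
t-spread monomials of the same degree componentwise dominated by `u`. -/
def BtGens (t : ℕ) (u : Multiset ℕ) : Set (Multiset ℕ) :=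
  {v | Multiset.card v = Multiset.card u ∧ TSpread t v ∧ Dominates v u}

/-- The sorted graph of `B_t(u)`: vertices the minimal generators, edges the sorted pairs. -/
def sortedGraph (t : ℕ) (u : Multiset ℕ) : SimpleGraph ↥(BtGens t u) :=
  SimpleGraph.fromRel (fun v w => SortedPair v.1 w.1)

/-- The graph has an induced cycle of length `n ≥ 4`. -/
def HasInducedCycle {V : Type*} (G : SimpleGraph V) : Prop :=
  ∃ n : ℕ, 4 ≤ n ∧ ∃ f : ZMod n → V, Function.Injective f ∧
    ∀ i j : ZMod n, G.Adj (f i) (f j) ↔ (j = i + 1 ∨ i = j + 1)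

/-
Sorting a pair `(u_p, w_q)` with `u_p ∈ A`, `w_q ∈ B` interleaves the indices of `u_{max p q}` with
those of `w_{min p q}`, so the sorting operator sends the pair to `(u_{max p q}, w_{min p q})`, and the
pair is sorted exactly when `q ≤ p`. The edges `{v₂, v₃}` and `{v₄, v₁}` thus give `b₃ ≤ a₂` and
`b₄ ≤ a₁`, and whichever of `a₁, a₂` is larger closes a chord.
-/

theorem altSplit_flatMap_pair {α β : Type*} (f g : β → α) :
    ∀ l : List β, altSplit (l.flatMap fun j => [f j, g j]) = (l.map f, l.map g)
  | [] => rfl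
  | _ :: l => by simp [List.flatMap_cons, altSplit, altSplit_flatMap_pair f g l]

theorem Multiset.map_add_map_eq_bind {α β : Type*} (s : Multiset α) (f g : α → β) :
    s.map f + s.map g = s.bind fun a => {f a, g a} := by
  simp only [← Multiset.bind_singleton, ← Multiset.bind_add, Multiset.insert_eq_cons,
    Multiset.singleton_add]

theorem mSort_coe_of_pairwise {l : List ℕ} (h : l.Pairwise (· ≤ ·)) : mSort ↑l = l := by
  rw [mSort, Multiset.coe_sort, List.mergeSort_eq_self _ h]

theorem sortPair_congr {u v u' v' : Multiset ℕ} (h : u + v = u' + v') :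
    sortPair u v = sortPair u' v' := by
  rw [sortPair, sortPair, h]

theorem sortedPair_comm (u v : Multiset ℕ) : SortedPair u v ↔ SortedPair v u := by
  simp only [SortedPair, sortPair, add_comm u v]
  tauto

theorem sortPair_map_range_of_interleaved (f g : ℕ → ℕ) (hfg : ∀ j, f j ≤ g j)
    (hgf : ∀ j, g j ≤ f (j + 1)) (n : ℕ) :
    sortPair ↑((List.range n).map f) ↑((List.range n).map g) =
      (↑((List.range n).map f), ↑((List.range n).map g)) := by
  have hf : Monotone f := monotone_nat_of_le_succ fun j => (hfg j).trans (hgf j)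
  have hsum : (↑((List.range n).flatMap fun j => [f j, g j]) : Multiset ℕ) =
      ↑((List.range n).map f) + ↑((List.range n).map g) := by
    rw [← Multiset.map_coe, ← Multiset.map_coe, Multiset.map_add_map_eq_bind, ← Multiset.coe_bind]
    rfl
  have hsorted : ((List.range n).flatMap fun j => [f j, g j]).Pairwise (· ≤ ·) := by
    refine List.pairwise_flatMap.mpr ⟨fun j _ => by simpa using hfg j,
      List.pairwise_lt_range.imp fun {i j} hij => ?_⟩
    have hgi : g i ≤ f j := (hgf i).trans (hf hij)
    simp only [List.mem_cons, List.not_mem_nil, or_false]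
    rintro x (rfl | rfl) y (rfl | rfl)
    exacts [hf hij.le, (hf hij.le).trans (hfg j), hgi, hgi.trans (hfg j)]
  rw [sortPair, ← hsum, mSort_coe_of_pairwise hsorted, altSplit_flatMap_pair]

section Generators

variable {t d : ℕ}

def idxA (t p j : ℕ) : ℕ := if j < p then j * t + 1 else j * t + 2

-- `genA t d p` and `genB t d q` are the elements of `A` and `B` with parameters `p` and `q`.
def genA (t d p : ℕ) : Multiset ℕ := ↑((List.range d).map (idxA t p))

def genB (t d q : ℕ) : Multiset ℕ := ↑((List.range (d - 1)).map (idxA t q)) + {(d - 1) * t + 3}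

/-- The `j`-th index of `genB t d q`, extended past `d` so that interleaving holds for all `j`. -/
def idxB (t d q j : ℕ) : ℕ := if j + 1 = d then j * t + 3 else idxA t q j

theorem genB_eq_map_range (q : ℕ) (hd : 0 < d) : genB t d q = ↑((List.range d).map (idxB t d q)) := by
  obtain ⟨e, rfl⟩ : ∃ e, d = e + 1 := ⟨d - 1, by omega⟩
  have hlow : (List.range e).map (idxB t (e + 1) q) = (List.range e).map (idxA t q) :=
    List.map_congr_left fun j hj => if_neg (by have := List.mem_range.mp hj; omega)
  rw [genB, List.range_succ, List.map_append, hlow, List.map_singleton, ← Multiset.coe_add,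
    idxB, if_pos rfl, Nat.add_sub_cancel]
  rfl

theorem genA_add_genB {a b : ℕ} (hd : 0 < d) (hb : b ≤ d - 1) :
    genA t d a + genB t d b = genA t d (max a b) + genB t d (min a b) := by
  simp only [genB_eq_map_range _ hd, genA, ← Multiset.map_coe, Multiset.map_add_map_eq_bind]
  refine Multiset.bind_congr fun j _ => ?_
  rcases le_total a b with hab | hab
  · rw [max_eq_right hab, min_eq_left hab]
    by_cases hj : j + 1 = d
    · simp only [idxB, idxA, if_pos hj]
      split_ifs <;> first | rfl | omega
    · simp only [idxB, if_neg hj, Multiset.pair_comm]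
  · rw [max_eq_left hab, min_eq_right hab]

theorem sortPair_genA_genB {a b : ℕ} (ht : 1 ≤ t) (hd : 0 < d) (ha : a ≤ d - 1) (hb : b ≤ d - 1) :
    sortPair (genA t d a) (genB t d b) = (genA t d (max a b), genB t d (min a b)) := by
  have hfg : ∀ j, idxA t (max a b) j ≤ idxB t d (min a b) j := fun j => by
    simp only [idxB, idxA]
    split_ifs <;> omega
  have hgf : ∀ j, idxB t d (min a b) j ≤ idxA t (max a b) (j + 1) := fun j => by
    have hsucc : (j + 1) * t = j * t + t := by ring
    simp only [idxB, idxA, hsucc]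
    split_ifs <;> omega
  rw [sortPair_congr (genA_add_genB hd hb), genB_eq_map_range _ hd]
  exact sortPair_map_range_of_interleaved _ _ hfg hgf d

theorem sum_genA_add_min (t p : ℕ) : ∀ d,
    (genA t d p).sum + min p d = (genA t d 0).sum
  | 0 => by simp [genA]
  | d + 1 => by
      have ih := sum_genA_add_min t p d
      simp only [genA, Multiset.sum_coe, List.range_succ, List.map_append, List.sum_append,
        List.map_singleton, List.sum_singleton] at ih ⊢
      simp only [idxA]
      split_ifs <;> omega

theorem genA_injOn : Set.InjOn (genA t d) (Set.Iic d) := by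
  intro p hp q hq h
  rw [Set.mem_Iic] at hp hq
  have hp' := sum_genA_add_min t p d
  have hq' := sum_genA_add_min t q d
  rw [h] at hp'
  omega

theorem genA_ne_genB (p q : ℕ) : genA t d p ≠ genB t d q := by
  intro h
  have hmem : (d - 1) * t + 3 ∈ genA t d p := by simp [h, genB]
  simp only [genA, Multiset.mem_coe, List.mem_map, List.mem_range] at hmem
  obtain ⟨j, hj, hje⟩ := hmem
  have : j * t ≤ (d - 1) * t := Nat.mul_le_mul_right t (by omega)
  simp only [idxA] at hje
  split_ifs at hje <;> omega

theorem sortedPair_genA_genB_iff {p q : ℕ} (ht : 1 ≤ t) (hd : 0 < d) (hp : p ≤ d - 1)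
    (hq : q ≤ d - 1) : SortedPair (genA t d p) (genB t d q) ↔ q ≤ p := by
  rw [SortedPair, sortPair_genA_genB ht hd hp hq]
  constructor
  · rintro (h | h)
    · have := genA_injOn (show max p q ≤ d by omega) (show p ≤ d by omega) (congrArg Prod.fst h)
      omega
    · exact absurd (congrArg Prod.fst h) (genA_ne_genB _ _)
  · intro h
    rw [max_eq_left h, min_eq_right h]
    exact Or.inl rfl

end Generators

theorem no_induced_4cycle_A_B_general (t d : ℕ) (ht : 1 ≤ t) (hd : 3 ≤ d)
    (a₁ a₂ b₃ b₄ : ℕ) (ha₁ : a₁ ≤ d - 1) (ha₂ : a₂ ≤ d - 1)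
    (hb₃ : 1 ≤ b₃ ∧ b₃ ≤ d - 1) (hb₄ : 1 ≤ b₄ ∧ b₄ ≤ d - 1)
    (v₁ v₂ v₃ v₄ : Multiset ℕ)
    (hv₁ : v₁ = ↑((List.range d).map (fun j => if j < a₁ then j * t + 1 else j * t + 2)))
    (hv₂ : v₂ = ↑((List.range d).map (fun j => if j < a₂ then j * t + 1 else j * t + 2)))
    (hv₃ : v₃ = ↑((List.range (d - 1)).map
        (fun j => if j < b₃ then j * t + 1 else j * t + 2)) + {(d - 1) * t + 3})
    (hv₄ : v₄ = ↑((List.range (d - 1)).map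
        (fun j => if j < b₄ then j * t + 1 else j * t + 2)) + {(d - 1) * t + 3})
    (e₂₃ : SortedPair v₂ v₃) (e₄₁ : SortedPair v₄ v₁) :
    SortedPair v₁ v₃ ∨ SortedPair v₂ v₄ := by
  have hd' : 0 < d := by omega
  have sorted_iff := fun {p q : ℕ} (hp : p ≤ d - 1) (hq : q ≤ d - 1) =>
    sortedPair_genA_genB_iff (t := t) ht hd' hp hq
  change v₁ = genA t d a₁ at hv₁
  change v₂ = genA t d a₂ at hv₂
  change v₃ = genB t d b₃ at hv₃
  change v₄ = genB t d b₄ at hv₄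
  subst hv₁ hv₂ hv₃ hv₄
  have h₂₃ : b₃ ≤ a₂ := (sorted_iff ha₂ hb₃.2).mp e₂₃
  have h₄₁ : b₄ ≤ a₁ := (sorted_iff ha₁ hb₄.2).mp ((sortedPair_comm _ _).mp e₄₁)
  rcases le_total a₂ a₁ with h | h
  · exact Or.inl ((sorted_iff ha₁ hb₃.2).mpr (h₂₃.trans h))
  · exact Or.inr ((sorted_iff ha₂ hb₄.2).mpr (h₄₁.trans h))

/-- four distinct generators v₁,v₂ ∈ A and v₃,v₄ ∈ B of
B_t((∏_{i=1}^{d−1} x_{(i−1)t+2})·x_{(d−1)t+3}) with {v₁,v₂},{v₂,v₃},{v₃,v₄},{v₄,v₁}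
sorted cannot form an induced 4-cycle: {v₁,v₃} or {v₂,v₄} is also sorted. -/
theorem no_induced_4cycle_A_B (t d : ℕ) (ht : 1 ≤ t) (hd : 3 ≤ d)
    (a₁ a₂ b₃ b₄ : ℕ) (ha₁ : a₁ ≤ d - 1) (ha₂ : a₂ ≤ d - 1)
    (hb₃ : 1 ≤ b₃ ∧ b₃ ≤ d - 1) (hb₄ : 1 ≤ b₄ ∧ b₄ ≤ d - 1)
    (v₁ v₂ v₃ v₄ : Multiset ℕ)
    (hv₁ : v₁ = ↑((List.range d).map (fun j => if j < a₁ then j * t + 1 else j * t + 2)))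
    (hv₂ : v₂ = ↑((List.range d).map (fun j => if j < a₂ then j * t + 1 else j * t + 2)))
    (hv₃ : v₃ = ↑((List.range (d - 1)).map
        (fun j => if j < b₃ then j * t + 1 else j * t + 2)) + {(d - 1) * t + 3})
    (hv₄ : v₄ = ↑((List.range (d - 1)).map
        (fun j => if j < b₄ then j * t + 1 else j * t + 2)) + {(d - 1) * t + 3})
    (hdist : List.Pairwise (· ≠ ·) [v₁, v₂, v₃, v₄])
    (e₁₂ : SortedPair v₁ v₂) (e₂₃ : SortedPair v₂ v₃)
    (e₃₄ : SortedPair v₃ v₄) (e₄₁ : SortedPair v₄ v₁) :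
    SortedPair v₁ v₃ ∨ SortedPair v₂ v₄ :=
  no_induced_4cycle_A_B_general t d ht hd a₁ a₂ b₃ b₄ ha₁ ha₂ hb₃ hb₄ v₁ v₂ v₃ v₄ hv₁ hv₂ hv₃ hv₄
    e₂₃ e₄₁
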